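/- Let 0 < p < 1 and let f, g : ℝ → ℝ with f(x,t) = (1-p)t + c·D(x,t) where c > 0 and D is positive with continuous second derivatives. Then the function u(x,t) = f(x,t)^{1/(1-p)} satisfies the pointwise identity u_t - u_xx - u^p = -(p/(1-p)²) c² (D_x)² f^{(2p-1)/(1-p)} whenever D_t = D_xx; in particular u_t - u_xx - u^p ≤ 0. -/

import Mathlib

/-!
With `a = 1/(1-p)` and `u = f^a`, the chain rule gives
`u_t - u_xx = a f^(a-1) ((1-p) + c (D_t - D_xx)) - a (a-1) c² D_x² f^(a-2)`.
The heat equation kills the middle term, and `a (1-p) = 1` together with `u^p = f^(a p) = f^(a-1)`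
makes the first term cancel against the reaction term `u^p`, leaving `-a (a-1) c² D_x² f^(a-2)`,
which is nonpositive because `a (a-1) = p/(1-p)² > 0`.
-/

open Filter Topology

lemma hasDerivAt_deriv_rpow_const {f f' : ℝ → ℝ} {f'' a x : ℝ}
    (hf : ∀ᶠ y in 𝓝 x, HasDerivAt f (f' y) y ∧ f y ≠ 0) (hf' : HasDerivAt f' f'' x) :
    HasDerivAt (fun y => deriv (fun z => f z ^ a) y)
      (a * (f'' * f x ^ (a - 1) + (a - 1) * f' x ^ 2 * f x ^ (a - 2))) x := by
  have hfx := hf.self_of_nhds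
  have hderiv : (fun y => deriv (fun z => f z ^ a) y) =ᶠ[𝓝 x]
      fun y => f' y * a * f y ^ (a - 1) :=
    hf.mono fun y hy => (hy.1.rpow_const (Or.inl hy.2)).deriv
  have h := (hf'.mul_const a).mul (hfx.1.rpow_const (p := a - 1) (Or.inl hfx.2))
  refine (h.congr_of_eventuallyEq hderiv).congr_deriv ?_
  rw [sub_sub, one_add_one_eq_two]
  ring

lemma heat_rpow_residual {p c F Dt Dx Dxx : ℝ} (hp1 : p ≠ 1) (hF : 0 ≤ F) (hheat : Dt = Dxx) :
    ((1 - p) + c * Dt) * (1 / (1 - p)) * F ^ (1 / (1 - p) - 1) -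
        1 / (1 - p) * (c * Dxx * F ^ (1 / (1 - p) - 1) +
          (1 / (1 - p) - 1) * (c * Dx) ^ 2 * F ^ (1 / (1 - p) - 2)) -
        (F ^ (1 / (1 - p))) ^ p
      = -(p / (1 - p) ^ 2) * c ^ 2 * Dx ^ 2 * F ^ ((2 * p - 1) / (1 - p)) := by
  subst hheat
  have h1p : 1 - p ≠ 0 := sub_ne_zero.mpr hp1.symm
  have hpow : (F ^ (1 / (1 - p))) ^ p = F ^ (1 / (1 - p) - 1) := by
    rw [← Real.rpow_mul hF]
    congr 1
    field_simp
    ring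
  have hexp : 1 / (1 - p) - 2 = (2 * p - 1) / (1 - p) := by
    field_simp
    ring
  have hcoef : 1 / (1 - p) * (1 / (1 - p) - 1) = p / (1 - p) ^ 2 := by
    field_simp
    ring
  have hinv : (1 - p) * (1 / (1 - p)) = 1 := mul_one_div_cancel h1p
  rw [hpow, ← hexp, ← hcoef]
  linear_combination F ^ (1 / (1 - p) - 1) * hinv

/-- Subsolution identity: if `D` is a positive solution of the heat equation and
`f(x,t) = (1-p)t + c D(x,t)`, then `u = f^{1/(1-p)}` satisfies
`u_t - u_xx - u^p = -(p/(1-p)²) c² (D_x)² f^{(2p-1)/(1-p)} ≤ 0`. -/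
theorem subsolution_identity (p c : ℝ) (hp : 0 < p) (hp1 : p < 1) (hc : 0 < c)
    (D Dt Dxx : ℝ → ℝ → ℝ) (Dx : ℝ → ℝ → ℝ) (x t : ℝ) (ht : 0 < t)
    (hDpos : ∀ y s, 0 < s → 0 < D y s)
    (hheat : Dt x t = Dxx x t)
    (hDt : HasDerivAt (fun s => D x s) (Dt x t) t)
    (hDx : ∀ y, HasDerivAt (fun z => D z t) (Dx y t) y)
    (hDxx : HasDerivAt (fun y => Dx y t) (Dxx x t) x) :
    deriv (fun s => ((1 - p) * s + c * D x s) ^ (1 / (1 - p))) t -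
        deriv (fun y => deriv
          (fun z => ((1 - p) * t + c * D z t) ^ (1 / (1 - p))) y) x -
        (((1 - p) * t + c * D x t) ^ (1 / (1 - p))) ^ p
      = -(p / (1 - p) ^ 2) * c ^ 2 * (Dx x t) ^ 2 *
          ((1 - p) * t + c * D x t) ^ ((2 * p - 1) / (1 - p)) ∧
    deriv (fun s => ((1 - p) * s + c * D x s) ^ (1 / (1 - p))) t -
        deriv (fun y => deriv
          (fun z => ((1 - p) * t + c * D z t) ^ (1 / (1 - p))) y) x -
        (((1 - p) * t + c * D x t) ^ (1 / (1 - p))) ^ p ≤ 0 := by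
  have hf_pos : ∀ y, 0 < (1 - p) * t + c * D y t := fun y =>
    add_pos (mul_pos (sub_pos.mpr hp1) ht) (mul_pos hc (hDpos y t ht))
  have hft : HasDerivAt (fun s => (1 - p) * s + c * D x s) ((1 - p) + c * Dt x t) t :=
    (((hasDerivAt_id' t).const_mul (1 - p)).add (hDt.const_mul c)).congr_deriv (by ring)
  have hfx : ∀ y, HasDerivAt (fun z => (1 - p) * t + c * D z t) (c * Dx y t) y := fun y =>
    ((hDx y).const_mul c).const_add _
  have hut := hft.rpow_const (p := 1 / (1 - p)) (Or.inl (hf_pos x).ne')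
  have huxx := hasDerivAt_deriv_rpow_const (a := 1 / (1 - p))
    (Eventually.of_forall fun y => ⟨hfx y, (hf_pos y).ne'⟩) (hDxx.const_mul c)
  have key := heat_rpow_residual (c := c) (Dx := Dx x t) hp1.ne (hf_pos x).le hheat
  rw [hut.deriv, huxx.deriv, key]
  set F := (1 - p) * t + c * D x t
  have hF := hf_pos x
  refine ⟨rfl, ?_⟩
  rw [neg_mul, neg_mul, neg_mul, neg_nonpos]
  positivity
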